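/- Let d ≥ 1. In the field of fractions of the polynomial ring ℂ[z,t], the following partial fraction decomposition holds: (1−t²)/∏_{m=0}^{d}(1−z·t^{2m}) = Σ_{k=0}^{d} R_k(t)/(1−z·t^{2k}), where R_k(t) = (−1)^k · t^{k(k+1)} · (1−t²) / ((t²;t²)_k · (t²;t²)_{d−k}). -/

import Mathlib

/-- The image of z in the fraction field of ℂ[z,t]. -/
noncomputable def Zfrac : FractionRing (MvPolynomial (Fin 2) ℂ) :=
  algebraMap (MvPolynomial (Fin 2) ℂ) _ (MvPolynomial.X 0)

/-- The image of t in the fraction field of ℂ[z,t]. -/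
noncomputable def Tfrac : FractionRing (MvPolynomial (Fin 2) ℂ) :=
  algebraMap (MvPolynomial (Fin 2) ℂ) _ (MvPolynomial.X 1)

/-- The q-shifted factorial (t²;t²)_k = (1−t²)(1−t⁴)⋯(1−t^{2k}). -/
noncomputable def qfac (k : ℕ) : FractionRing (MvPolynomial (Fin 2) ℂ) :=
  ∏ j ∈ Finset.range k, (1 - Tfrac ^ (2 * (j + 1)))

/-!
Partial fractions for `(∏ₘ (1 - z aₘ))⁻¹` are Lagrange interpolation of the constant `1` at the
nodes `aₘ⁻¹`: clearing denominators, the `k`-th coefficient is `(∏_{j ≠ k} (1 - aⱼ / aₖ))⁻¹`.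
For `aₘ = t^{2m}` the factors with `j > k` give `(t²;t²)_{d-k}`, and those with `j < k`, after
reflecting `j ↦ k - 1 - j`, give `(-1)^k t^{-k(k+1)} (t²;t²)_k`.
-/

open Finset Polynomial

theorem Lagrange.sum_prod_sub_div_sub_eq_one {ι F : Type*} [Field F] [DecidableEq ι]
    {s : Finset ι} {v : ι → F} (hvs : Set.InjOn v s) (hs : s.Nonempty) (x : F) :
    ∑ k ∈ s, ∏ j ∈ s.erase k, (x - v j) / (v k - v j) = 1 := by
  simpa [Lagrange.basis, Lagrange.basisDivisor, eval_finsetSum, eval_prod, div_eq_inv_mul]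
    using congrArg (eval x) (Lagrange.sum_basis hvs hs)

theorem Finset.prod_range_succ_erase {M : Type*} [CommMonoid M] (f : ℕ → M) {k d : ℕ}
    (hk : k ≤ d) :
    ∏ j ∈ (range (d + 1)).erase k, f j
      = (∏ j ∈ range k, f j) * ∏ i ∈ range (d - k), f (k + 1 + i) := by
  set g := Function.update f k 1
  have hfg : ∏ j ∈ (range (d + 1)).erase k, f j = ∏ j ∈ (range (d + 1)).erase k, g j :=
    prod_congr rfl fun j hj => (Function.update_of_ne (ne_of_mem_erase hj) _ _).symm
  rw [hfg, prod_erase _ (Function.update_self k 1 f), show d + 1 = k + 1 + (d - k) by omega,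
    prod_range_add, prod_range_succ, Function.update_self, mul_one]
  congr 1
  · exact prod_congr rfl fun j hj => Function.update_of_ne (mem_range.mp hj).ne _ _
  · exact prod_congr rfl fun i _ => Function.update_of_ne (by omega) _ _

theorem inv_prod_one_sub_mul_eq_sum {ι F : Type*} [Field F] [DecidableEq ι] {s : Finset ι}
    (hs : s.Nonempty) {a : ι → F} (ha : ∀ i ∈ s, a i ≠ 0) (hinj : Set.InjOn a s) {x : F}
    (hx : ∀ i ∈ s, 1 - x * a i ≠ 0) :
    (∏ i ∈ s, (1 - x * a i))⁻¹
      = ∑ k ∈ s, (∏ j ∈ s.erase k, (1 - a j / a k))⁻¹ / (1 - x * a k) := by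
  symm
  refine eq_inv_of_mul_eq_one_left ?_
  have hterm : ∀ k ∈ s, (∏ j ∈ s.erase k, (1 - a j / a k))⁻¹ / (1 - x * a k)
      * ∏ i ∈ s, (1 - x * a i)
      = ∏ j ∈ s.erase k, (x - (a j)⁻¹) / ((a k)⁻¹ - (a j)⁻¹) := by
    intro k hk
    rw [← mul_prod_erase s _ hk, div_eq_mul_inv, mul_assoc, inv_mul_cancel_left₀ (hx k hk),
      ← prod_inv_distrib, ← prod_mul_distrib]
    refine prod_congr rfl fun j hj => ?_
    have haj := ha j (mem_of_mem_erase hj)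
    have hak := ha k hk
    have hjk : a j ≠ a k := hinj.ne (mem_of_mem_erase hj) hk (ne_of_mem_erase hj)
    field_simp
    ring
  rw [sum_mul, sum_congr rfl hterm]
  exact Lagrange.sum_prod_sub_div_sub_eq_one (inv_injective.comp_injOn hinj) hs x

section FieldPowers

variable {F : Type*} [Field F] {t : F}

theorem pow_mul_prod_range_one_sub_inv (ht : t ≠ 0) (k : ℕ) :
    t ^ (k * (k + 1)) * ∏ i ∈ range k, (1 - (t ^ (2 * (i + 1)))⁻¹)
      = (-1) ^ k * ∏ i ∈ range k, (1 - t ^ (2 * (i + 1))) := by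
  induction k with
  | zero => simp
  | succ k ih =>
    rw [prod_range_succ, prod_range_succ, show (k + 1) * (k + 1 + 1) = k * (k + 1) + 2 * (k + 1)
      by ring, pow_add, pow_succ]
    have hu : t ^ (2 * (k + 1)) * (1 - (t ^ (2 * (k + 1)))⁻¹) = t ^ (2 * (k + 1)) - 1 := by
      rw [mul_one_sub, mul_inv_cancel₀ (pow_ne_zero _ ht)]
    linear_combination (t ^ (2 * (k + 1)) - 1) * ih
      + t ^ (k * (k + 1)) * (∏ i ∈ range k, (1 - (t ^ (2 * (i + 1)))⁻¹)) * hu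

theorem pow_mul_prod_range_one_sub_div (ht : t ≠ 0) (k : ℕ) :
    t ^ (k * (k + 1)) * ∏ j ∈ range k, (1 - t ^ (2 * j) / t ^ (2 * k))
      = (-1) ^ k * ∏ i ∈ range k, (1 - t ^ (2 * (i + 1))) := by
  rw [← prod_range_reflect, ← pow_mul_prod_range_one_sub_inv ht]
  congr 1
  refine prod_congr rfl fun i hi => ?_
  have hk : 2 * k = 2 * (k - 1 - i) + 2 * (i + 1) := by have := mem_range.mp hi; omega
  rw [hk, pow_add, div_mul_cancel_left₀ (pow_ne_zero _ ht)]

theorem pow_mul_prod_erase_one_sub_div (ht : t ≠ 0) {k d : ℕ} (hk : k ≤ d) :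
    t ^ (k * (k + 1)) * ∏ j ∈ (range (d + 1)).erase k, (1 - t ^ (2 * j) / t ^ (2 * k))
      = (-1) ^ k * (∏ i ∈ range k, (1 - t ^ (2 * (i + 1))))
          * ∏ i ∈ range (d - k), (1 - t ^ (2 * (i + 1))) := by
  rw [prod_range_succ_erase _ hk, ← mul_assoc, pow_mul_prod_range_one_sub_div ht]
  congr 1
  refine prod_congr rfl fun i _ => ?_
  rw [show 2 * (k + 1 + i) = 2 * k + 2 * (i + 1) by ring, pow_add,
    mul_div_cancel_left₀ _ (pow_ne_zero _ ht)]

end FieldPowers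

theorem inv_prod_one_sub_mul_pow_two_mul_eq_sum {F : Type*} [Field F] {t z : F} (ht : t ≠ 0)
    (hinj : Function.Injective (t ^ · : ℕ → F)) {d : ℕ}
    (hz : ∀ m ≤ d, 1 - z * t ^ (2 * m) ≠ 0) :
    (∏ m ∈ range (d + 1), (1 - z * t ^ (2 * m)))⁻¹
      = ∑ k ∈ range (d + 1), ((-1) ^ k * t ^ (k * (k + 1)) /
          ((∏ i ∈ range k, (1 - t ^ (2 * (i + 1))))
            * ∏ i ∈ range (d - k), (1 - t ^ (2 * (i + 1))))) / (1 - z * t ^ (2 * k)) := by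
  rw [inv_prod_one_sub_mul_eq_sum nonempty_range_add_one (fun _ _ => pow_ne_zero _ ht)
    (hinj.comp (mul_right_injective₀ two_ne_zero)).injOn
    (fun m hm => hz m (mem_range_succ_iff.mp hm))]
  refine sum_congr rfl fun k hk => ?_
  have hcoeff := pow_mul_prod_erase_one_sub_div ht (mem_range_succ_iff.mp hk)
  congr 1
  calc _ = t ^ (k * (k + 1)) * (t ^ (k * (k + 1))
        * ∏ j ∈ (range (d + 1)).erase k, (1 - t ^ (2 * j) / t ^ (2 * k)))⁻¹ := by
        rw [mul_inv, mul_inv_cancel_left₀ (pow_ne_zero _ ht)]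
    _ = _ := by rw [hcoeff, mul_inv, mul_inv, ← inv_pow, inv_neg, inv_one]; ring

theorem Tfrac_ne_zero : Tfrac ≠ 0 :=
  IsFractionRing.to_map_ne_zero_of_mem_nonZeroDivisors
    (mem_nonZeroDivisors_of_ne_zero (MvPolynomial.X_ne_zero 1))

theorem Tfrac_pow_injective : Function.Injective (Tfrac ^ · : ℕ → _) := fun m n h =>
  pow_injective_of_not_isUnit MvPolynomial.X_prime.not_isUnit (MvPolynomial.X_ne_zero 1)
    (IsFractionRing.injective (MvPolynomial (Fin 2) ℂ) (FractionRing (MvPolynomial (Fin 2) ℂ))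
      (by simpa only [map_pow, Tfrac] using h))

theorem one_sub_Zfrac_mul_Tfrac_pow_ne_zero (n : ℕ) : 1 - Zfrac * Tfrac ^ n ≠ 0 := by
  have hp : (1 - MvPolynomial.X 0 * MvPolynomial.X 1 ^ n : MvPolynomial (Fin 2) ℂ) ≠ 0 := by
    intro h
    simpa using congrArg (MvPolynomial.eval 0) h
  simpa [Zfrac, Tfrac] using IsFractionRing.to_map_ne_zero_of_mem_nonZeroDivisors
    (K := FractionRing (MvPolynomial (Fin 2) ℂ)) (mem_nonZeroDivisors_of_ne_zero hp)

theorem stmt10_general (d : ℕ) :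
    (1 - Tfrac ^ 2) / (∏ m ∈ Finset.range (d + 1), (1 - Zfrac * Tfrac ^ (2 * m)))
      = ∑ k ∈ Finset.range (d + 1),
          ((-1 : FractionRing (MvPolynomial (Fin 2) ℂ)) ^ k * Tfrac ^ (k * (k + 1)) *
              (1 - Tfrac ^ 2) / (qfac k * qfac (d - k)))
            / (1 - Zfrac * Tfrac ^ (2 * k)) := by
  rw [div_eq_mul_inv, inv_prod_one_sub_mul_pow_two_mul_eq_sum Tfrac_ne_zero Tfrac_pow_injective
    fun m _ => one_sub_Zfrac_mul_Tfrac_pow_ne_zero _, mul_sum]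
  refine sum_congr rfl fun k _ => ?_
  rw [qfac, qfac]
  ring

theorem stmt10 (d : ℕ) (hd : 1 ≤ d) :
    (1 - Tfrac ^ 2) / (∏ m ∈ Finset.range (d + 1), (1 - Zfrac * Tfrac ^ (2 * m)))
      = ∑ k ∈ Finset.range (d + 1),
          ((-1 : FractionRing (MvPolynomial (Fin 2) ℂ)) ^ k * Tfrac ^ (k * (k + 1)) *
              (1 - Tfrac ^ 2) / (qfac k * qfac (d - k)))
            / (1 - Zfrac * Tfrac ^ (2 * k)) :=
  stmt10_general d
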